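/- Let (X,T) be a dynamical system with the shadowing property. Then the set of points z ∈ X whose orbit closure is an odometer (equivalently, the set of regularly recurrent points z for which the orbit closure is equicontinuous) is dense in the non-wandering set Ω(X,T). -/

import Mathlib

/-!
Near a non-wandering point `x` there is a periodic `δ`-pseudo-orbit. Shadowing it and using
compactness along the shadowing orbit produces a new almost-return whose period is a multiple of
the old one, at a finer precision. Iterating with geometrically shrinking precisions yields a
tower of periodic pseudo-orbits of periods `N₀ ∣ N₁ ∣ ⋯` converging to a point `z` near `x` whose
orbit is a uniform limit of periodic sequences. Such a point is regularly recurrent, and its orbit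
closure is covered by the closures of the `N`-residue classes of its orbit, each small for the
metric `sup_n dist (T^n ·) (T^n ·)`. Two of these finitely many compact pieces either meet or lie
at positive distance, which gives equicontinuity.
-/

open Filter

/-- `(X,T)` has the shadowing property. -/
def ShadowingProperty {X : Type*} [MetricSpace X] (T : X → X) : Prop :=
  ∀ ε > (0 : ℝ), ∃ δ > (0 : ℝ), ∀ x : ℕ → X,
    (∀ k, dist (T (x k)) (x (k + 1)) < δ) → ∃ y : X, ∀ k, dist (T^[k] y) (x k) < ε

/-- `z` is regularly recurrent: for every neighborhood `U` of `z` there is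
`k ≥ 1` with `T^{kn}(z) ∈ U` for all `n`. -/
def RegularlyRecurrent {X : Type*} [TopologicalSpace X] (T : X → X) (z : X) : Prop :=
  ∀ U ∈ nhds z, ∃ k : ℕ, 0 < k ∧ ∀ n : ℕ, T^[k * n] z ∈ U

/-- A dynamical system is an odometer if it is equicontinuous and has a
regularly recurrent point with dense orbit. -/
def IsOdometer {Y : Type*} [MetricSpace Y] (S : Y → Y) : Prop :=
  Equicontinuous (fun n : ℕ => S^[n]) ∧
    ∃ z : Y, RegularlyRecurrent S z ∧ Dense (Set.range fun n => S^[n] z)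

/-- The orbit closure of `z`. -/
def orbitClosure {X : Type*} [TopologicalSpace X] (T : X → X) (z : X) : Set X :=
  closure (Set.range fun n => T^[n] z)

/-- `x` is a non-wandering point of `(X,T)`. -/
def NonWandering {X : Type*} [TopologicalSpace X] (T : X → X) (x : X) : Prop :=
  ∀ U ∈ nhds x, ∃ y ∈ U, ∃ k : ℕ, 0 < k ∧ T^[k] y ∈ U

open Topology Set Function

section Tower

variable {X : Type*} [MetricSpace X] {T : X → X}

theorem NonWandering.exists_dist_iterate_lt {x : X} (hx : NonWandering T x) {ρ : ℝ}
    (hρ : 0 < ρ) : ∃ y, dist y x < ρ ∧ ∃ k > 0, dist (T^[k] y) y < 2 * ρ := by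
  obtain ⟨y, hy, k, hk, hky⟩ := hx _ (Metric.ball_mem_nhds x hρ)
  rw [Metric.mem_ball] at hy hky
  exact ⟨y, hy, k, hk, by linarith [dist_triangle_right (T^[k] y) y x]⟩

theorem dist_iterate_mod_succ_lt {N : ℕ} (hN : 0 < N) {q : X} {δ : ℝ}
    (hq : dist (T^[N] q) q < δ) (s : ℕ) :
    dist (T (T^[s % N] q)) (T^[(s + 1) % N] q) < δ := by
  rw [← iterate_succ_apply' T, Nat.succ_eq_add_one, ← Nat.mod_add_mod]
  obtain hlt | heq := (Nat.lt_or_eq_of_le (Nat.mod_lt s hN) :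
    s % N + 1 < N ∨ s % N + 1 = N)
  · rw [Nat.mod_eq_of_lt hlt, dist_self]
    exact dist_nonneg.trans_lt hq
  · rwa [heq, Nat.mod_self]

theorem exists_lt_dist_lt [CompactSpace X] (u : ℕ → X) {δ : ℝ} (hδ : 0 < δ) :
    ∃ m m', m < m' ∧ dist (u m') (u m) < δ := by
  obtain ⟨a, -, φ, hφ, hlim⟩ := isCompact_univ.tendsto_subseq fun n => mem_univ (u n)
  obtain ⟨K, hK⟩ := Metric.cauchySeq_iff'.1 hlim.cauchySeq δ hδ
  exact ⟨φ K, φ (K + 1), hφ K.lt_succ_self, hK (K + 1) K.le_succ⟩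

theorem ShadowingProperty.exists_refinement [CompactSpace X] (hsh : ShadowingProperty T)
    {η : ℝ} (hη : 0 < η) :
    ∃ δ > 0, ∀ (N : ℕ) (q : X), 0 < N → dist (T^[N] q) q < δ → ∀ δ' > 0, ∃ (N' : ℕ) (q' : X),
      0 < N' ∧ dist (T^[N'] q') q' < δ' ∧ N ∣ N' ∧ ∀ s, dist (T^[s] q') (T^[s % N] q) < η := by
  obtain ⟨δ, hδ, hshadow⟩ := hsh η hη
  refine ⟨δ, hδ, fun N q hN hq δ' hδ' => ?_⟩
  obtain ⟨y, hy⟩ := hshadow _ (dist_iterate_mod_succ_lt hN hq)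
  obtain ⟨m, m', hmm', hclose⟩ := exists_lt_dist_lt (fun m => T^[N * m] y) hδ'
  refine ⟨N * (m' - m), T^[N * m] y, Nat.mul_pos hN (Nat.sub_pos_of_lt hmm'), ?_,
    dvd_mul_right N _, fun s => ?_⟩
  · rwa [← iterate_add_apply, ← mul_add, Nat.sub_add_cancel hmm'.le]
  · simpa only [← iterate_add_apply, Nat.add_mul_mod_self_left] using hy (s + N * m)

theorem ShadowingProperty.exists_tower [CompactSpace X] (hsh : ShadowingProperty T) {x : X}
    (hx : NonWandering T x) {C : ℝ} (hC : 0 < C) :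
    ∃ (N : ℕ → ℕ) (q : ℕ → X), (∀ i, 0 < N i) ∧ (∀ i, N i ∣ N (i + 1)) ∧
      (∀ i s, dist (T^[s] (q (i + 1))) (T^[s % N i] (q i)) ≤ C / 2 / 2 ^ i) ∧
      dist (q 0) x < C := by
  have hη : ∀ i : ℕ, 0 < C / 2 / 2 ^ i := fun i => by positivity
  choose δ hδ hrefine using fun i => hsh.exists_refinement (hη i)
  obtain ⟨q₀, hq₀x, N₀, hN₀, hq₀⟩ := hx.exists_dist_iterate_lt (lt_min hC (half_pos (hδ 0)))
  -- `next` is made total (the identity off `Stage i`) so that the tower is a plain recursion.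
  let Stage (i : ℕ) (p : ℕ × X) : Prop := 0 < p.1 ∧ dist (T^[p.1] p.2) p.2 < δ i
  have hstep : ∀ i p, ∃ p' : ℕ × X, Stage i p → Stage (i + 1) p' ∧ p.1 ∣ p'.1 ∧
      ∀ s, dist (T^[s] p'.2) (T^[s % p.1] p.2) < C / 2 / 2 ^ i := by
    intro i p
    by_cases hp : Stage i p
    · obtain ⟨N', q', hN', hq', hdvd, htrack⟩ := hrefine i p.1 p.2 hp.1 hp.2 _ (hδ (i + 1))
      exact ⟨(N', q'), fun _ => ⟨⟨hN', hq'⟩, hdvd, htrack⟩⟩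
    · exact ⟨p, fun h => absurd h hp⟩
  choose next hnext using hstep
  let u : ℕ → ℕ × X := fun i => Nat.rec (N₀, q₀) next i
  have hu : ∀ i, Stage i (u i) := by
    intro i
    induction i with
    | zero => exact ⟨hN₀, hq₀.trans_le (by linarith [min_le_right C (δ 0 / 2)])⟩
    | succ i ih => exact (hnext i (u i) ih).1
  refine ⟨fun i => (u i).1, fun i => (u i).2, fun i => (hu i).1,
    fun i => (hnext i (u i) (hu i)).2.1, fun i s => ((hnext i (u i) (hu i)).2.2 s).le,
    hq₀x.trans_le (min_le_left _ _)⟩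

end Tower

/-- The orbit of `z` is a uniform limit of periodic sequences. -/
def IsLimitPeriodicPt {X : Type*} [PseudoMetricSpace X] (T : X → X) (z : X) : Prop :=
  ∀ ε > 0, ∃ N > 0, ∀ m s, dist (T^[N * m + s] z) (T^[s] z) < ε

section TowerLimit

variable {X : Type*} [MetricSpace X] {T : X → X} {N : ℕ → ℕ} {q : ℕ → X} {C : ℝ}

theorem dist_iterate_le_of_tower (hT : Continuous T) (hdvd : ∀ i, N i ∣ N (i + 1))
    (hq : ∀ i s, dist (T^[s] (q (i + 1))) (T^[s % N i] (q i)) ≤ C / 2 / 2 ^ i) {z : X}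
    (hlim : Tendsto q atTop (𝓝 z)) (i s : ℕ) : dist (T^[s % N i] (q i)) (T^[s] z) ≤ C / 2 ^ i := by
  have hstep : ∀ j, dist (T^[s % N j] (q j)) (T^[s % N (j + 1)] (q (j + 1))) ≤ C / 2 / 2 ^ j := by
    intro j
    rw [dist_comm, ← Nat.mod_mod_of_dvd s (hdvd j)]
    exact hq j _
  have hshift : Tendsto (fun j => T^[s] (q (j + 1))) atTop (𝓝 (T^[s] z)) :=
    ((hT.iterate s).tendsto z).comp (hlim.comp (tendsto_add_atTop_nat 1))
  have hgap : Tendsto (fun j => dist (T^[s] (q (j + 1))) (T^[s % N j] (q j))) atTop (𝓝 0) :=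
    squeeze_zero (fun _ => dist_nonneg) (hq · s) (summable_geometric_two' C).tendsto_atTop_zero
  exact dist_le_of_le_geometric_two_of_tendsto hstep (hshift.congr_dist hgap) i

theorem exists_isLimitPeriodicPt_of_tower [CompleteSpace X] (hT : Continuous T)
    (hN : ∀ i, 0 < N i) (hdvd : ∀ i, N i ∣ N (i + 1))
    (hq : ∀ i s, dist (T^[s] (q (i + 1))) (T^[s % N i] (q i)) ≤ C / 2 / 2 ^ i) :
    ∃ z, dist (q 0) z ≤ C ∧ IsLimitPeriodicPt T z := by
  obtain ⟨z, hlim⟩ := cauchySeq_tendsto_of_complete (cauchySeq_of_le_geometric_two (C := C)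
    fun i => by simpa [dist_comm] using hq i 0)
  have htrack := dist_iterate_le_of_tower hT hdvd hq hlim
  refine ⟨z, by simpa using htrack 0 0, fun ε hε => ?_⟩
  obtain ⟨i, hi⟩ := ((summable_geometric_two' C).tendsto_atTop_zero.eventually
    (gt_mem_nhds (by positivity : 0 < ε / 4))).exists
  refine ⟨N i, hN i, fun m s => ?_⟩
  have hper := htrack i (N i * m + s)
  rw [Nat.mul_add_mod] at hper
  calc dist (T^[N i * m + s] z) (T^[s] z)
      ≤ dist (T^[s % N i] (q i)) (T^[N i * m + s] z) + dist (T^[s % N i] (q i)) (T^[s] z) :=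
        dist_triangle_left _ _ _
    _ ≤ C / 2 ^ i + C / 2 ^ i := add_le_add hper (htrack i s)
    _ < ε := by
        have : C / 2 ^ i = 2 * (C / 2 / 2 ^ i) := by ring
        linarith

end TowerLimit

theorem exists_pos_forall_dist_apply_le_of_finite_cover {ι κ X Y : Type*} [Finite ι]
    [MetricSpace X] [PseudoMetricSpace Y] {A : ι → Set X} (hA : ∀ r, IsCompact (A r))
    {F : κ → X → Y} {ε : ℝ} (hF : ∀ r, ∀ p ∈ A r, ∀ p' ∈ A r, ∀ n, dist (F n p) (F n p') ≤ ε) :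
    ∃ θ > 0, ∀ p ∈ ⋃ r, A r, ∀ p' ∈ ⋃ r, A r, dist p p' < θ →
      ∀ n, dist (F n p) (F n p') ≤ 2 * ε := by
  have hpair : ∀ r r' : ι, ∃ θ > 0, ∀ p ∈ A r, ∀ p' ∈ A r', dist p p' < θ →
      ∀ n, dist (F n p) (F n p') ≤ 2 * ε := by
    intro r r'
    by_cases hmeet : Disjoint (A r) (A r')
    · obtain ⟨θ, hθ, hsep⟩ := Metric.exists_pos_forall_lt_edist (hA r) (hA r').isClosed hmeet
      refine ⟨θ, hθ, fun p hp p' hp' hlt => absurd hlt (not_lt.2 ?_)⟩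
      have := hsep p hp p' hp'
      rw [edist_nndist, ENNReal.coe_lt_coe, ← NNReal.coe_lt_coe, coe_nndist] at this
      exact this.le
    · obtain ⟨q, hq, hq'⟩ := not_disjoint_iff.1 hmeet
      refine ⟨1, one_pos, fun p hp p' hp' _ n => ?_⟩
      linarith [dist_triangle (F n p) (F n q) (F n p'), hF r p hp q hq n, hF r' q hq' p' hp' n]
  choose θ hθ hθF using hpair
  obtain ⟨t, htθ, ht⟩ := ((eventually_all.2 fun rr : ι × ι =>
      eventually_nhdsWithin_of_eventually_nhds (eventually_lt_nhds (hθ rr.1 rr.2))).and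
      (self_mem_nhdsWithin : Ioi (0 : ℝ) ∈ 𝓝[>] 0)).exists
  refine ⟨t, ht, fun p hp p' hp' hpp' => ?_⟩
  obtain ⟨r, hr⟩ := mem_iUnion.1 hp
  obtain ⟨r', hr'⟩ := mem_iUnion.1 hp'
  exact hθF r r' p hr p' hr' (hpp'.trans (htθ (r, r')))

section OrbitClosure

variable {X : Type*} [TopologicalSpace X] {T : X → X}

theorem mem_orbitClosure_self (T : X → X) (z : X) : z ∈ orbitClosure T z :=
  subset_closure ⟨0, rfl⟩

theorem mapsTo_orbitClosure (hT : Continuous T) (z : X) :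
    MapsTo T (orbitClosure T z) (orbitClosure T z) :=
  MapsTo.closure (fun _ ⟨n, hn⟩ => ⟨n + 1, hn ▸ iterate_succ_apply' T n z⟩) hT

theorem RegularlyRecurrent.restrict {s : Set X} (h : MapsTo T s s) {z : X} (hz : z ∈ s)
    (hrec : RegularlyRecurrent T z) : RegularlyRecurrent (h.restrict T s s) ⟨z, hz⟩ := by
  intro U hU
  obtain ⟨V, hV, hVU⟩ := (mem_nhds_subtype s _ U).1 hU
  obtain ⟨k, hk, hkV⟩ := hrec V hV
  refine ⟨k, hk, fun n => hVU ?_⟩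
  simpa only [mem_preimage, MapsTo.coe_iterate_restrict] using hkV n

theorem dense_range_iterate_restrict_orbitClosure {z : X}
    (h : MapsTo T (orbitClosure T z) (orbitClosure T z)) :
    Dense (range fun n => (h.restrict T _ _)^[n] ⟨z, mem_orbitClosure_self T z⟩) := by
  rw [Subtype.dense_iff, ← range_comp]
  simp only [comp_def, MapsTo.coe_iterate_restrict]
  exact subset_rfl

end OrbitClosure

namespace IsLimitPeriodicPt

variable {X : Type*} [MetricSpace X] {T : X → X} {z : X}

theorem regularlyRecurrent (hz : IsLimitPeriodicPt T z) : RegularlyRecurrent T z := by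
  intro U hU
  obtain ⟨ε, hε, hball⟩ := Metric.mem_nhds_iff.1 hU
  obtain ⟨N, hN, hper⟩ := hz ε hε
  exact ⟨N, hN, fun m => hball (hper m 0)⟩

theorem exists_pos_forall_dist_iterate_le [CompactSpace X] (hz : IsLimitPeriodicPt T z)
    (hT : Continuous T) {ε : ℝ} (hε : 0 < ε) :
    ∃ θ > 0, ∀ p ∈ orbitClosure T z, ∀ p' ∈ orbitClosure T z, dist p p' < θ →
      ∀ n, dist (T^[n] p) (T^[n] p') ≤ ε := by
  obtain ⟨N, hN, hper⟩ := hz (ε / 4) (by positivity)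
  set A : Fin N → Set X := fun r => closure (range fun m => T^[N * m + r] z)
  have htrack : ∀ r, ∀ p ∈ A r, ∀ n, dist (T^[n] p) (T^[n + r] z) ≤ ε / 4 := by
    intro r p hp n
    refine closure_minimal (t := {p | dist (T^[n] p) (T^[n + r] z) ≤ ε / 4}) ?_
      (isClosed_le ((hT.iterate n).dist continuous_const) continuous_const) hp
    rintro _ ⟨m, rfl⟩
    show dist (T^[n] (T^[N * m + r] z)) _ ≤ _
    rw [← iterate_add_apply, show n + (N * m + r) = N * m + (n + r) by ring]
    exact (hper m _).le
  have hcover : orbitClosure T z ⊆ ⋃ r, A r := by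
    refine closure_minimal ?_ (isClosed_iUnion_of_finite fun _ => isClosed_closure)
    rintro _ ⟨s, rfl⟩
    refine mem_iUnion.2 ⟨⟨s % N, Nat.mod_lt s hN⟩, subset_closure ⟨s / N, ?_⟩⟩
    simp only [Nat.div_add_mod]
  have hsmall : ∀ r, ∀ p ∈ A r, ∀ p' ∈ A r, ∀ n, dist (T^[n] p) (T^[n] p') ≤ ε / 2 :=
    fun r p hp p' hp' n => (dist_triangle_right _ _ (T^[n + r] z)).trans
      (by linarith [htrack r p hp n, htrack r p' hp' n])
  obtain ⟨θ, hθ, hclose⟩ :=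
    exists_pos_forall_dist_apply_le_of_finite_cover (fun r => isClosed_closure.isCompact) hsmall
  exact ⟨θ, hθ, fun p hp p' hp' hpp' n => by
    linarith [hclose p (hcover hp) p' (hcover hp') hpp' n]⟩

theorem isOdometer_restrict [CompactSpace X] (hz : IsLimitPeriodicPt T z) (hT : Continuous T) :
    IsOdometer ((mapsTo_orbitClosure hT z).restrict T _ _) := by
  refine ⟨UniformEquicontinuous.equicontinuous ?_, _,
    hz.regularlyRecurrent.restrict _ (mem_orbitClosure_self T z),
    dense_range_iterate_restrict_orbitClosure _⟩
  refine Metric.uniformEquicontinuous_iff.2 fun ε hε => ?_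
  obtain ⟨θ, hθ, hclose⟩ := hz.exists_pos_forall_dist_iterate_le hT (half_pos hε)
  refine ⟨θ, hθ, fun p p' hpp' n => ?_⟩
  rw [Subtype.dist_eq, MapsTo.coe_iterate_restrict, MapsTo.coe_iterate_restrict]
  exact (hclose p p.2 p' p'.2 hpp' n).trans_lt (half_lt_self hε)

end IsLimitPeriodicPt

/-- In a system with shadowing, points whose orbit closure is an odometer are
dense in the non-wandering set. -/
theorem stmt7 {X : Type*} [MetricSpace X] [CompactSpace X]
    (T : X → X) (hT : Continuous T) (hsh : ShadowingProperty T)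
    (x : X) (hx : NonWandering T x) :
    x ∈ closure {z : X |
      ∃ h : Set.MapsTo T (orbitClosure T z) (orbitClosure T z),
        IsOdometer (Set.MapsTo.restrict T _ _ h)} := by
  refine Metric.mem_closure_iff.2 fun ε hε => ?_
  obtain ⟨N, q, hN, hdvd, hq, hq₀x⟩ := hsh.exists_tower hx (half_pos hε)
  obtain ⟨z, hq₀z, hz⟩ := exists_isLimitPeriodicPt_of_tower hT hN hdvd hq
  refine ⟨z, ⟨mapsTo_orbitClosure hT z, hz.isOdometer_restrict hT⟩, ?_⟩
  linarith [dist_triangle_left x z (q 0)]
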